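/- arXiv:1401.7504 — 3 statements merged into one kernel-verified Lean document; each statement's English description precedes it below -/
import Mathlib

section
/- For every (x₁,x₂,x₃) ∈ 𝔛 the symmetric condition (1/x₁)·D₂₃ − (1/x₂)·D₃₁ + (1/x₃)·D₁₂ = 0 holds. -/
noncomputable section

open Complex ComplexConjugate

/-- Membership in Falbel's cross-ratio variety 𝔛. -/
def memX (x₁ x₂ x₃ : ℂ) : Prop :=
  x₁ ≠ 0 ∧ x₂ ≠ 0 ∧ x₃ ≠ 0 ∧
  ‖x₂‖ = ‖x₁‖ * ‖x₃‖ ∧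
  2 * (‖x₁‖) ^ 2 * x₃.re =
    (‖x₁‖) ^ 2 + (‖x₂‖) ^ 2 - 2 * x₁.re - 2 * x₂.re + 1

/-- The minor `D₂₃`. -/
def D23 (x₁ x₂ x₃ : ℂ) : ℂ :=
  (((‖x₂‖) ^ 2 : ℝ) / ((‖x₃‖) ^ 2 : ℝ) : ℝ) *
    (conj x₂ * conj x₃ - conj x₂ - conj x₃)

/-- The minor `D₃₁`. -/
def D31 (x₁ x₂ x₃ : ℂ) : ℂ :=
  conj x₃ * (((‖x₁‖) ^ 2 : ℝ) : ℂ) * (1 + conj x₁ * conj x₃ - conj x₁)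

/-- The minor `D₁₂`. -/
def D12 (x₁ x₂ x₃ : ℂ) : ℂ :=
  (conj x₂ / x₁) * (1 - conj x₁ - conj x₂)

/-!
Writing `|x|² = x * conj x` and `2 Re x = x + conj x`, both real equations defining 𝔛 become
polynomial identities in the `xᵢ` and `conj xᵢ`: `|x₂|² = |x₁|² |x₃|²` and
`|x₁|² (x₃ + conj x₃) = |x₁|² + |x₂|² - (x₁ + conj x₁) - (x₂ + conj x₂) + 1`.
Multiplied by `x₁ x₂ x₃`, the symmetric condition is `-|x₂|²` times the second identity, modulo
the first.
-/

section

variable {x₁ x₂ x₃ : ℂ}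

theorem mul_conj_eq_of_norm_eq (h : ‖x₂‖ = ‖x₁‖ * ‖x₃‖) :
    x₂ * conj x₂ = x₁ * conj x₁ * (x₃ * conj x₃) := by
  simp only [mul_conj', h]
  push_cast
  ring

theorem memX.mul_conj_mul_add_conj_eq (hx : memX x₁ x₂ x₃) :
    x₁ * conj x₁ * (x₃ + conj x₃) =
      x₁ * conj x₁ + x₂ * conj x₂ - (x₁ + conj x₁) - (x₂ + conj x₂) + 1 := by
  simp only [mul_conj', add_conj]
  exact_mod_cast by linear_combination hx.2.2.2.2

theorem D23_eq_of_norm_eq (h : ‖x₂‖ = ‖x₁‖ * ‖x₃‖) (h₃ : x₃ ≠ 0) :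
    D23 x₁ x₂ x₃ = x₁ * conj x₁ * (conj x₂ * conj x₃ - conj x₂ - conj x₃) := by
  have hratio : ‖x₂‖ ^ 2 / ‖x₃‖ ^ 2 = ‖x₁‖ ^ 2 := by
    rw [h, mul_pow, mul_div_cancel_right₀ _ (by positivity)]
  rw [D23, hratio, mul_conj']
  push_cast
  rfl

theorem D31_eq :
    D31 x₁ x₂ x₃ = conj x₃ * (x₁ * conj x₁) * (1 + conj x₁ * conj x₃ - conj x₁) := by
  rw [D31, mul_conj']
  push_cast
  rfl

end

/-- The symmetric condition satisfied by the minors on 𝔛. -/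
theorem symmetric_condition (x₁ x₂ x₃ : ℂ) (hx : memX x₁ x₂ x₃) :
    (1 / x₁) * D23 x₁ x₂ x₃ - (1 / x₂) * D31 x₁ x₂ x₃ + (1 / x₃) * D12 x₁ x₂ x₃ = 0 := by
  have hre := hx.mul_conj_mul_add_conj_eq
  obtain ⟨h₁, h₂, h₃, hnorm, -⟩ := hx
  rw [D23_eq_of_norm_eq hnorm h₃, D31_eq, D12]
  field_simp
  linear_combination
    (x₂ + x₁ * (1 + conj x₁ * conj x₃ - conj x₁) - x₂ * conj x₂) * mul_conj_eq_of_norm_eq hnorm -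
      x₂ * conj x₂ * hre
end
end

section
/- Let p₁, p₂, p₃, p₄ ∈ ℂ³ be null lifts with ⟨pᵢ,pⱼ⟩ ≠ 0 for all i ≠ j, with cross-ratios 𝕏₁, 𝕏₂, 𝕏₃ and Cartan invariants 𝔸₁, 𝔸₂, 𝔸₃, 𝔸₄. Then: |𝕏₁ + 𝕏₂ − 1|² = 4·|𝕏₁|·|𝕏₂|·cos(𝔸₁)·cos(𝔸₄); |𝕏₁ + conj(𝕏₂) − 1|² = 4·|𝕏₁|·|𝕏₂|·cos(𝔸₂)·cos(𝔸₃); |𝕏₃ + 1/𝕏₁ − 1|² = 4·(|𝕏₃|/|𝕏₁|)·cos(𝔸₂)·cos(𝔸₄); |conj(𝕏₃) + 1/𝕏₁ − 1|² = 4·(|𝕏₃|/|𝕏₁|)·cos(𝔸₁)·cos(𝔸₃); |1/𝕏₂ + 1/𝕏₃ − 1|² = (4/(|𝕏₂|·|𝕏₃|))·cos(𝔸₃)·cos(𝔸₄); |1/𝕏₂ + 1/conj(𝕏₃) − 1|² = (4/(|𝕏₂|·|𝕏₃|))·cos(𝔸₁)·cos(𝔸₂). -/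
noncomputable section

open Complex ComplexConjugate

/-- The Hermitian form of signature (2,1) on ℂ³. -/
def herm (z w : Fin 3 → ℂ) : ℂ :=
  z 0 * conj (w 2) + z 1 * conj (w 1) + z 2 * conj (w 0)

/-- A null lift: a nonzero vector with `⟨p,p⟩ = 0`. -/
def IsNullLift (p : Fin 3 → ℂ) : Prop := p ≠ 0 ∧ herm p p = 0

/-- The complex cross-ratio `𝕏(p,q,r,s) = (⟨r,p⟩·⟨s,q⟩)/(⟨s,p⟩·⟨r,q⟩)`. -/
def crossRatio (p q r s : Fin 3 → ℂ) : ℂ :=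
  (herm r p * herm s q) / (herm s p * herm r q)

/-- Cartan's angular invariant `𝔸(p,q,r) = arg(−⟨p,q⟩·⟨q,r⟩·⟨r,p⟩)`. -/
def cartan (p q r : Fin 3 → ℂ) : ℝ :=
  Complex.arg (-(herm p q * herm q r * herm r p))

/-!
Four vectors in ℂ³ have a singular 4 × 4 Gram matrix, and for null lifts its diagonal
vanishes. Multiplying `𝕏(a,b,c,d) + 𝕏(a,c,b,d) - 1` by its common denominator `D` gives a
numerator `N`, and the vanishing of the Gram determinant says precisely that
`N · conj N = (u + ū)(v + v̄)`, where `u`, `v` are the triple products defining `𝔸(b,c,d)` and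
`𝔸(a,b,c)`. As `u + ū = 2‖u‖ cos (arg u)` and `‖u‖‖v‖ = ‖𝕏(a,b,c,d)‖‖𝕏(a,c,b,d)‖‖D‖²`, this is
the first identity for an arbitrary quadruple. The other five are the same identity for
permuted quadruples: swapping the points within a pair inverts `𝕏`, exchanging the two pairs
conjugates it, and `cos 𝔸` is invariant under all permutations.
-/

open scoped Matrix

theorem Matrix.det_mul_eq_zero_of_card_lt {m n K : Type*} [Fintype m] [Fintype n] [DecidableEq m]
    [Field K] (A : Matrix m n K) (B : Matrix n m K) (h : Fintype.card n < Fintype.card m) :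
    (A * B).det = 0 := by
  by_contra hdet
  have hfull :=
    (A * B).rank_of_isUnit ((A * B).isUnit_iff_isUnit_det.mpr (isUnit_iff_ne_zero.mpr hdet))
  have hle := (A.rank_mul_le_left B).trans A.rank_le_card_width
  omega

theorem herm_conj_symm (z w : Fin 3 → ℂ) : conj (herm z w) = herm w z := by
  simp only [herm, map_add, map_mul, conj_conj]
  ring

theorem det_herm_gram_eq_zero (v : Fin 4 → Fin 3 → ℂ) :
    (Matrix.of fun i j => herm (v i) (v j)).det = 0 := by
  have hgram : (Matrix.of fun i j => herm (v i) (v j)) =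
      Matrix.of v * (Matrix.of fun i (k : Fin 3) => v i k.rev)ᴴ := by
    ext i j
    simp [Matrix.mul_apply, Fin.sum_univ_three, herm]
  rw [hgram]
  exact Matrix.det_mul_eq_zero_of_card_lt _ _ (by simp)

theorem herm_cycle_relation_of_null {a b c d : Fin 3 → ℂ} (ha : herm a a = 0)
    (hb : herm b b = 0) (hc : herm c c = 0) (hd : herm d d = 0) :
    herm a b * herm b a * herm c d * herm d c + herm a c * herm c a * herm b d * herm d b
        + herm a d * herm d a * herm b c * herm c b =
      herm a b * herm b c * herm c d * herm d a + herm a d * herm d c * herm c b * herm b a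
        + herm a b * herm b d * herm d c * herm c a + herm a c * herm c d * herm d b * herm b a
        + herm a c * herm c b * herm b d * herm d a + herm a d * herm d b * herm b c * herm c a := by
  have hgram := det_herm_gram_eq_zero ![a, b, c, d]
  simp [Matrix.det_succ_row_zero, Fin.sum_univ_succ, Fin.succAbove_of_lt_succ,
    Fin.succAbove_of_succ_le, ha, hb, hc, hd] at hgram
  linear_combination hgram

theorem crossRatio_swap_left (p q r s : Fin 3 → ℂ) :
    crossRatio q p r s = (crossRatio p q r s)⁻¹ := by
  rw [crossRatio, crossRatio, inv_div]
  ring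

theorem crossRatio_swap_right (p q r s : Fin 3 → ℂ) :
    crossRatio p q s r = (crossRatio p q r s)⁻¹ := by
  rw [crossRatio, crossRatio, inv_div]

theorem crossRatio_swap_pairs (p q r s : Fin 3 → ℂ) :
    crossRatio r s p q = conj (crossRatio p q r s) := by
  simp only [crossRatio, map_div₀, map_mul, herm_conj_symm]
  ring

theorem cartan_rotate (p q r : Fin 3 → ℂ) : cartan q r p = cartan p q r := by
  rw [cartan, cartan]
  ring_nf

theorem cos_cartan_swap_left (p q r : Fin 3 → ℂ) :
    Real.cos (cartan q p r) = Real.cos (cartan p q r) := by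
  have hconj :
      -(herm q p * herm p r * herm r q) = conj (-(herm p q * herm q r * herm r p)) := by
    simp only [map_neg, map_mul, herm_conj_symm]
    ring
  rw [cartan, cartan, hconj, arg_conj]
  split_ifs with h
  · rw [h]
  · exact Real.cos_neg _

theorem cos_cartan_swap_right (p q r : Fin 3 → ℂ) :
    Real.cos (cartan p r q) = Real.cos (cartan p q r) := by
  rw [cartan_rotate q p r, cos_cartan_swap_left]

theorem norm_sq_eq_of_mul_conj_eq {z D u v : ℂ} {c : ℝ} (hD : D ≠ 0)
    (hz : z * D * conj (z * D) = (u + conj u) * (v + conj v))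
    (huv : ‖u‖ * ‖v‖ = c * ‖D‖ ^ 2) :
    ‖z‖ ^ 2 = 4 * c * Real.cos (arg u) * Real.cos (arg v) := by
  rw [mul_conj, add_conj, add_conj, normSq_eq_norm_sq, ← ofReal_mul] at hz
  have hre : ‖z‖ ^ 2 * ‖D‖ ^ 2 = 4 * u.re * v.re := by
    rw [← mul_pow, ← norm_mul, ofReal_inj.mp hz]
    ring
  apply mul_right_cancel₀ (pow_ne_zero 2 (norm_ne_zero_iff.mpr hD))
  rw [hre, ← norm_mul_cos_arg u, ← norm_mul_cos_arg v]
  linear_combination (4 * Real.cos (arg u) * Real.cos (arg v)) * huv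

theorem norm_sq_crossRatio_add_crossRatio_sub_one {a b c d : Fin 3 → ℂ} (ha : herm a a = 0)
    (hb : herm b b = 0) (hc : herm c c = 0) (hd : herm d d = 0) (hda : herm d a ≠ 0)
    (hbc : herm b c ≠ 0) :
    ‖crossRatio a b c d + crossRatio a c b d - 1‖ ^ 2 =
      4 * ‖crossRatio a b c d‖ * ‖crossRatio a c b d‖ * Real.cos (cartan b c d) *
        Real.cos (cartan a b c) := by
  have hcb : herm c b ≠ 0 := by
    rw [← herm_conj_symm]
    exact (map_ne_zero _).mpr hbc
  have hD : herm d a * herm c b * herm b c ≠ 0 := mul_ne_zero (mul_ne_zero hda hcb) hbc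
  have hnum : (crossRatio a b c d + crossRatio a c b d - 1) * (herm d a * herm c b * herm b c) =
      herm c a * herm d b * herm b c + herm b a * herm d c * herm c b
        - herm d a * herm c b * herm b c := by
    simp only [crossRatio]
    field_simp
  rw [mul_assoc (4 : ℝ)]
  refine norm_sq_eq_of_mul_conj_eq hD ?_ ?_
  · rw [hnum]
    simp only [map_add, map_sub, map_mul, map_neg, herm_conj_symm]
    linear_combination (herm b c * herm c b) * herm_cycle_relation_of_null ha hb hc hd
  · have hsymm (x y : Fin 3 → ℂ) : ‖herm x y‖ = ‖herm y x‖ := by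
      rw [← herm_conj_symm, norm_conj]
    simp only [crossRatio, norm_div, norm_mul, norm_neg, hsymm c b, hsymm c d, hsymm a b]
    field_simp

/-- Relations between moduli of combinations of the cross-ratios and the
cosines of the Cartan angular invariants. -/
theorem crossRatio_cartan_identities (p : Fin 4 → Fin 3 → ℂ)
    (hnull : ∀ i, IsNullLift (p i))
    (hne : ∀ i j, i ≠ j → herm (p i) (p j) ≠ 0)
    (X₁ X₂ X₃ : ℂ) (A₁ A₂ A₃ A₄ : ℝ)
    (hX₁ : X₁ = crossRatio (p 0) (p 1) (p 2) (p 3))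
    (hX₂ : X₂ = crossRatio (p 0) (p 2) (p 1) (p 3))
    (hX₃ : X₃ = crossRatio (p 1) (p 2) (p 0) (p 3))
    (hA₁ : A₁ = cartan (p 1) (p 2) (p 3))
    (hA₂ : A₂ = cartan (p 0) (p 2) (p 3))
    (hA₃ : A₃ = cartan (p 0) (p 1) (p 3))
    (hA₄ : A₄ = cartan (p 0) (p 1) (p 2)) :
    (‖X₁ + X₂ - 1‖) ^ 2 =
        4 * ‖X₁‖ * ‖X₂‖ * Real.cos A₁ * Real.cos A₄ ∧
    (‖X₁ + conj X₂ - 1‖) ^ 2 =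
        4 * ‖X₁‖ * ‖X₂‖ * Real.cos A₂ * Real.cos A₃ ∧
    (‖X₃ + 1 / X₁ - 1‖) ^ 2 =
        4 * (‖X₃‖ / ‖X₁‖) * Real.cos A₂ * Real.cos A₄ ∧
    (‖conj X₃ + 1 / X₁ - 1‖) ^ 2 =
        4 * (‖X₃‖ / ‖X₁‖) * Real.cos A₁ * Real.cos A₃ ∧
    (‖1 / X₂ + 1 / X₃ - 1‖) ^ 2 =
        4 / (‖X₂‖ * ‖X₃‖) * Real.cos A₃ * Real.cos A₄ ∧
    (‖1 / X₂ + 1 / conj X₃ - 1‖) ^ 2 =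
        4 / (‖X₂‖ * ‖X₃‖) * Real.cos A₁ * Real.cos A₂ := by
  subst hX₁ hX₂ hX₃ hA₁ hA₂ hA₃ hA₄
  have key (i j k l : Fin 4) (hli : l ≠ i) (hjk : j ≠ k) :=
    norm_sq_crossRatio_add_crossRatio_sub_one (hnull i).2 (hnull j).2 (hnull k).2 (hnull l).2
      (hne l i hli) (hne j k hjk)
  simp only [one_div]
  refine ⟨key 0 1 2 3 (by decide) (by decide), ?_, ?_, ?_, ?_, ?_⟩
  · have h := key 1 0 3 2 (by decide) (by decide)
    rw [crossRatio_swap_left (p 0) (p 1) (p 3) (p 2), crossRatio_swap_right (p 0) (p 1) (p 2) (p 3),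
      inv_inv, crossRatio_swap_pairs (p 0) (p 2) (p 1) (p 3), norm_conj,
      cos_cartan_swap_right (p 0) (p 2) (p 3), cos_cartan_swap_left (p 0) (p 1) (p 3)] at h
    exact h
  · have h := key 1 2 0 3 (by decide) (by decide)
    rw [crossRatio_swap_left (p 0) (p 1) (p 2) (p 3), norm_inv,
      cos_cartan_swap_left (p 0) (p 2) (p 3), cartan_rotate (p 0) (p 1) (p 2)] at h
    linear_combination h
  · have h := key 0 3 1 2 (by decide) (by decide)
    rw [crossRatio_swap_pairs (p 1) (p 2) (p 0) (p 3),
      crossRatio_swap_right (p 0) (p 1) (p 2) (p 3), norm_conj, norm_inv, ← cartan_rotate (p 3) (p 1) (p 2),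
      cos_cartan_swap_right (p 0) (p 1) (p 3)] at h
    linear_combination h
  · have h := key 2 0 1 3 (by decide) (by decide)
    rw [crossRatio_swap_left (p 0) (p 2) (p 1) (p 3),
      crossRatio_swap_left (p 1) (p 2) (p 0) (p 3), norm_inv, norm_inv, ← cartan_rotate (p 2) (p 0) (p 1)] at h
    linear_combination h
  · have h := key 0 2 3 1 (by decide) (by decide)
    rw [crossRatio_swap_right (p 0) (p 2) (p 1) (p 3), crossRatio_swap_right (p 0) (p 3) (p 1) (p 2),
      crossRatio_swap_pairs (p 1) (p 2) (p 0) (p 3), norm_inv, norm_inv, norm_conj,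
      cartan_rotate (p 1) (p 2) (p 3)] at h
    linear_combination h
end
end

section
/- Let p₁, p₂, p₃, p₄ ∈ ℂ³ be pairwise non-proportional null lifts with ⟨pᵢ,pⱼ⟩ ≠ 0 for all i ≠ j, with cross-ratios 𝕏₁, 𝕏₂, 𝕏₃. Then 𝕏₁ + 𝕏₂ = 1 if and only if Re(⟨p₁,p₂⟩·⟨p₂,p₃⟩·⟨p₃,p₁⟩) = 0 or Re(⟨p₂,p₃⟩·⟨p₃,p₄⟩·⟨p₄,p₂⟩) = 0 (i.e. if and only if p₁,p₂,p₃ or p₂,p₃,p₄ lie on a common ℂ-circle). Moreover, if Re(⟨p₁,p₂⟩·⟨p₂,p₃⟩·⟨p₃,p₁⟩) = 0 then 𝕏₃ + 1/𝕏₁ = 1 and 1/𝕏₂ + 1/𝕏₃ = 1, while if Re(⟨p₂,p₃⟩·⟨p₃,p₄⟩·⟨p₄,p₂⟩) = 0 then conj(𝕏₃) + 1/𝕏₁ = 1 and 1/𝕏₂ + 1/conj(𝕏₃) = 1. -/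
noncomputable section

open Complex ComplexConjugate

lemma herm_conj (z w : Fin 3 → ℂ) : herm w z = conj (herm z w) := by
  simp [herm]; ring

lemma herm_add_left (x y w : Fin 3 → ℂ) : herm (x + y) w = herm x w + herm y w := by
  simp [herm]; ring

lemma herm_smul_left (c : ℂ) (x w : Fin 3 → ℂ) : herm (c • x) w = c * herm x w := by
  simp [herm]; ring

lemma herm_zero_left (w : Fin 3 → ℂ) : herm 0 w = 0 := by simp [herm]

lemma herm_sum_left {ι : Type*} (s : Finset ι) (g : ι → Fin 3 → ℂ) (w : Fin 3 → ℂ) :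
    herm (∑ i ∈ s, g i) w = ∑ i ∈ s, herm (g i) w := by
  induction s using Finset.cons_induction with
  | empty => simp [herm_zero_left]
  | cons i s hi ih => simp [Finset.sum_cons, herm_add_left, ih]

lemma re_eq_zero_iff' (z : ℂ) : z.re = 0 ↔ z + conj z = 0 := by
  rw [Complex.add_conj, Complex.ofReal_eq_zero]
  constructor <;> intro h <;> linarith

lemma key_alg (a b c d e f X₁ X₂ X₃ : ℂ)
    (ha : a ≠ 0) (hb : b ≠ 0) (hc : c ≠ 0) (hd : d ≠ 0) (he : e ≠ 0) (hf : f ≠ 0)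
    (hdet : -c * conj a * conj d * conj f + c * d * conj c * conj d - c * d * conj b * conj e
      - b * f * conj a * conj e - b * e * conj c * conj d + b * e * conj b * conj e
      + a * f * conj a * conj f - a * e * conj b * conj f - a * d * f * conj c = 0)
    (hX₁ : X₁ = (conj b * conj e) / (conj c * conj d))
    (hX₂ : X₂ = (conj a * conj f) / (conj c * d))
    (hX₃ : X₃ = (a * conj f) / (conj e * b)) :
    (X₁ + X₂ = 1 ↔ (a * d * conj b).re = 0 ∨ (d * f * conj e).re = 0) ∧
    ((a * d * conj b).re = 0 → X₃ + 1 / X₁ = 1 ∧ 1 / X₂ + 1 / X₃ = 1) ∧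
    ((d * f * conj e).re = 0 → conj X₃ + 1 / X₁ = 1 ∧ 1 / X₂ + 1 / conj X₃ = 1) := by
  have cne : ∀ z : ℂ, z ≠ 0 → conj z ≠ 0 := fun z hz h => hz (by
    rw [← Complex.conj_conj z, h, map_zero])
  have hA := cne a ha; have hB := cne b hb; have hC := cne c hc
  have hD := cne d hd; have hE := cne e he; have hF := cne f hf
  have hTre : (a * d * conj b).re = 0 ↔ a * d * conj b + conj a * conj d * b = 0 := by
    rw [re_eq_zero_iff']; simp [map_mul]
  have hSre : (d * f * conj e).re = 0 ↔ d * f * conj e + conj d * conj f * e = 0 := by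
    rw [re_eq_zero_iff']; simp [map_mul]
  set P : ℂ := conj b * conj e * d + conj a * conj f * conj d - conj c * conj d * d with hPdef
  have hPconj : conj P = b * e * conj d + a * f * d - c * d * conj d := by
    simp [hPdef, map_add, map_sub, map_mul]
  have hsplit : X₁ + X₂ - 1 = P / (conj c * conj d * d) := by
    rw [hX₁, hX₂, hPdef]
    field_simp
  have hsumP : X₁ + X₂ = 1 ↔ P = 0 := by
    rw [← sub_eq_zero (a := X₁ + X₂), hsplit, div_eq_zero_iff,
      or_iff_left (mul_ne_zero (mul_ne_zero hC hD) hd)]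
  have hPP : P * conj P =
      (a * d * conj b + conj a * conj d * b) * (d * f * conj e + conj d * conj f * e) := by
    rw [hPconj, hPdef]; linear_combination (d * conj d) * hdet
  have main : X₁ + X₂ = 1 ↔ (a * d * conj b).re = 0 ∨ (d * f * conj e).re = 0 := by
    rw [hsumP, hTre, hSre, ← mul_eq_zero, ← hPP, mul_eq_zero]
    constructor
    · intro h; exact Or.inl h
    · rintro (h | h)
      · exact h
      · rw [← Complex.conj_conj P, h, map_zero]
  have hX₁ne : X₁ ≠ 0 := by
    rw [hX₁]; exact div_ne_zero (mul_ne_zero hB hE) (mul_ne_zero hC hD)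
  have hX₂ne : X₂ ≠ 0 := by
    rw [hX₂]; exact div_ne_zero (mul_ne_zero hA hF) (mul_ne_zero hC hd)
  have hX₃ne : X₃ ≠ 0 := by
    rw [hX₃]; exact div_ne_zero (mul_ne_zero ha hF) (mul_ne_zero hE hb)
  have hX₃cne : conj X₃ ≠ 0 := cne _ hX₃ne
  refine ⟨main, ?_, ?_⟩
  · intro hT
    have hsum : X₁ + X₂ = 1 := main.mpr (Or.inl hT)
    have hT' : a * d * conj b + conj a * conj d * b = 0 := hTre.mp hT
    have hid : X₂ * (a * d * conj b) = X₁ * X₃ * (conj a * conj d * b) := by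
      rw [hX₁, hX₂, hX₃]; field_simp
    have h1 : X₁ * X₃ = X₁ - 1 := by
      have hTne : a * d * conj b ≠ 0 := mul_ne_zero (mul_ne_zero ha hd) hB
      have : X₂ * (a * d * conj b) = -(X₁ * X₃) * (a * d * conj b) := by
        rw [hid]; linear_combination (X₁ * X₃) * hT'
      have h2 := mul_right_cancel₀ hTne this
      linear_combination h2 - hsum
    constructor
    · field_simp
      linear_combination h1
    · field_simp
      linear_combination h1 - (X₃ - 1) * hsum
  · intro hS
    have hsum : X₁ + X₂ = 1 := main.mpr (Or.inr hS)
    have hS' : d * f * conj e + conj d * conj f * e = 0 := hSre.mp hS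
    have hX₃c : conj X₃ = (conj a * f) / (e * conj b) := by
      rw [hX₃, map_div₀, map_mul, map_mul, Complex.conj_conj, Complex.conj_conj]
    have hid : X₂ * (d * f * conj e) = X₁ * conj X₃ * (conj d * conj f * e) := by
      rw [hX₁, hX₂, hX₃c]; field_simp
    have h1 : X₁ * conj X₃ = X₁ - 1 := by
      have hSne : d * f * conj e ≠ 0 := mul_ne_zero (mul_ne_zero hd hf) hE
      have : X₂ * (d * f * conj e) = -(X₁ * conj X₃) * (d * f * conj e) := by
        rw [hid]; linear_combination (X₁ * conj X₃) * hS'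
      have h2 := mul_right_cancel₀ hSne this
      linear_combination h2 - hsum
    constructor
    · field_simp
      linear_combination h1
    · field_simp
      linear_combination h1 - (conj X₃ - 1) * hsum

/-- `𝕏₁ + 𝕏₂ = 1` iff `p₁,p₂,p₃` or `p₂,p₃,p₄` lie on a common ℂ-circle
(vanishing real part of the triple Hermitian product), together with the
accompanying relations on `𝕏₃` in each case. -/
theorem sum_eq_one_iff_C_circle (p : Fin 4 → Fin 3 → ℂ)
    (hnull : ∀ i, IsNullLift (p i))
    (hprop : ∀ i j, i ≠ j → ∀ c : ℂ, p i ≠ c • p j)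
    (hne : ∀ i j, i ≠ j → herm (p i) (p j) ≠ 0)
    (X₁ X₂ X₃ : ℂ)
    (hX₁ : X₁ = crossRatio (p 0) (p 1) (p 2) (p 3))
    (hX₂ : X₂ = crossRatio (p 0) (p 2) (p 1) (p 3))
    (hX₃ : X₃ = crossRatio (p 1) (p 2) (p 0) (p 3)) :
    (X₁ + X₂ = 1 ↔
      (herm (p 0) (p 1) * herm (p 1) (p 2) * herm (p 2) (p 0)).re = 0 ∨
      (herm (p 1) (p 2) * herm (p 2) (p 3) * herm (p 3) (p 1)).re = 0) ∧
    ((herm (p 0) (p 1) * herm (p 1) (p 2) * herm (p 2) (p 0)).re = 0 →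
      X₃ + 1 / X₁ = 1 ∧ 1 / X₂ + 1 / X₃ = 1) ∧
    ((herm (p 1) (p 2) * herm (p 2) (p 3) * herm (p 3) (p 1)).re = 0 →
      conj X₃ + 1 / X₁ = 1 ∧ 1 / X₂ + 1 / conj X₃ = 1) := by
  -- linear dependence of four vectors in ℂ³ and the vanishing Gram determinant
  have hdep : ¬ LinearIndependent ℂ p := by
    intro h
    have := h.fintype_card_le_finrank
    simp [Module.finrank_fin_fun] at this
  obtain ⟨g, hgsum, i0, hgi⟩ := Fintype.not_linearIndependent_iff.mp hdep
  set G : Matrix (Fin 4) (Fin 4) ℂ := Matrix.of fun i j => herm (p j) (p i) with hG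
  have hmul : G.mulVec g = 0 := by
    funext i
    have h1 : herm (∑ j, g j • p j) (p i) = 0 := by rw [hgsum, herm_zero_left]
    rw [herm_sum_left] at h1
    simp only [herm_smul_left] at h1
    simpa [Matrix.mulVec, dotProduct, hG, mul_comm] using h1
  have hdetG : G.det = 0 :=
    Matrix.exists_mulVec_eq_zero_iff.mp ⟨g, fun h => hgi (by rw [h]; rfl), hmul⟩
  have h00 := (hnull 0).2
  have h11 := (hnull 1).2
  have h22 := (hnull 2).2
  have h33 := (hnull 3).2
  have hdet : -(herm (p 0) (p 3)) * conj (herm (p 0) (p 1)) * conj (herm (p 1) (p 2)) *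
        conj (herm (p 2) (p 3))
      + herm (p 0) (p 3) * herm (p 1) (p 2) * conj (herm (p 0) (p 3)) * conj (herm (p 1) (p 2))
      - herm (p 0) (p 3) * herm (p 1) (p 2) * conj (herm (p 0) (p 2)) * conj (herm (p 1) (p 3))
      - herm (p 0) (p 2) * herm (p 2) (p 3) * conj (herm (p 0) (p 1)) * conj (herm (p 1) (p 3))
      - herm (p 0) (p 2) * herm (p 1) (p 3) * conj (herm (p 0) (p 3)) * conj (herm (p 1) (p 2))
      + herm (p 0) (p 2) * herm (p 1) (p 3) * conj (herm (p 0) (p 2)) * conj (herm (p 1) (p 3))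
      + herm (p 0) (p 1) * herm (p 2) (p 3) * conj (herm (p 0) (p 1)) * conj (herm (p 2) (p 3))
      - herm (p 0) (p 1) * herm (p 1) (p 3) * conj (herm (p 0) (p 2)) * conj (herm (p 2) (p 3))
      - herm (p 0) (p 1) * herm (p 1) (p 2) * herm (p 2) (p 3) * conj (herm (p 0) (p 3)) = 0 := by
    rw [← hdetG]
    simp [hG, Matrix.det_succ_row_zero, Fin.sum_univ_succ, Matrix.submatrix,
      show (Fin.succ 2 : Fin 4) = 3 from rfl,
      show ∀ i : Fin 3, Fin.succAbove 1 i = if i.val < 1 then i.castSucc else i.succ from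
        fun i => rfl,
      show Fin.succAbove (2:Fin 4) 2 = 3 from rfl,
      show Fin.succAbove (3:Fin 4) 2 = 2 from rfl, h00, h11, h22, h33,
      herm_conj (p 0) (p 1), herm_conj (p 0) (p 2), herm_conj (p 0) (p 3),
      herm_conj (p 1) (p 2), herm_conj (p 1) (p 3), herm_conj (p 2) (p 3)]
    ring
  have key := key_alg (herm (p 0) (p 1)) (herm (p 0) (p 2)) (herm (p 0) (p 3))
    (herm (p 1) (p 2)) (herm (p 1) (p 3)) (herm (p 2) (p 3)) X₁ X₂ X₃
    (hne 0 1 (by decide)) (hne 0 2 (by decide)) (hne 0 3 (by decide))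
    (hne 1 2 (by decide)) (hne 1 3 (by decide)) (hne 2 3 (by decide))
    (by linear_combination hdet)
    (by rw [hX₁, crossRatio, herm_conj (p 0) (p 2), herm_conj (p 1) (p 3),
          herm_conj (p 0) (p 3), herm_conj (p 1) (p 2)])
    (by rw [hX₂, crossRatio, herm_conj (p 0) (p 1), herm_conj (p 2) (p 3),
          herm_conj (p 0) (p 3)])
    (by rw [hX₃, crossRatio, herm_conj (p 2) (p 3), herm_conj (p 1) (p 3)])
  rw [show herm (p 2) (p 0) = conj (herm (p 0) (p 2)) from herm_conj _ _,
    show herm (p 3) (p 1) = conj (herm (p 1) (p 3)) from herm_conj _ _]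
  exact key
end
end
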